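/- arXiv:1903.09299 — 5 statements merged into one kernel-verified Lean document; each statement's English description precedes it below -/
import Mathlib

section
/- Let A ≥ A' > 0 and σ > 0. Let P : ℝ → ℝ be a Borel-measurable even function with P(0) = 0 and P(A') ≥ 0, such that the map x ↦ P(x)/x² is nondecreasing on (0, A'] and P(x) = P(A') for all x ∈ [A', A]. Then for every Borel probability measure μ on ℝ with μ([-A, A]) = 1 and ∫ x² dμ(x) ≤ σ², one has ∫ P(x) dμ(x) ≤ min(σ²/A'², 1) · P(A'). -/
open MeasureTheory

/-!
On `[-A, A]` one has `P x ≤ min (x² / A'²) 1 · P A'`: for `|x| ≤ A'` compare `P x / x²` at `|x|`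
and `A'`, beyond `A'` use saturation. Integrating and using `∫ min (g, 1) ≤ min (∫ g, 1)` for a
probability measure turns the average-power constraint into the bound.
-/

section PointwiseBound

variable {P : ℝ → ℝ} {a b : ℝ}

lemma le_sq_div_sq_mul_of_ratio_mono
    (hratio : ∀ x y : ℝ, 0 < x → x ≤ y → y ≤ a → P x / x ^ 2 ≤ P y / y ^ 2)
    {t : ℝ} (ht : 0 < t) (hta : t ≤ a) :
    P t ≤ t ^ 2 / a ^ 2 * P a := by
  have h := hratio t a ht hta le_rfl
  rwa [div_le_iff₀ (by positivity), div_mul_comm] at h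

lemma le_min_sq_div_sq_mul_of_nonneg (ha : 0 < a) (hP0 : P 0 = 0)
    (hratio : ∀ x y : ℝ, 0 < x → x ≤ y → y ≤ a → P x / x ^ 2 ≤ P y / y ^ 2)
    (hsat : ∀ x ∈ Set.Icc a b, P x = P a) {t : ℝ} (ht : 0 ≤ t) (htb : t ≤ b) :
    P t ≤ min (t ^ 2 / a ^ 2) 1 * P a := by
  rcases ht.eq_or_lt with rfl | ht
  · simp [hP0]
  rcases le_or_gt t a with hta | hat
  · have hmin : min (t ^ 2 / a ^ 2) 1 = t ^ 2 / a ^ 2 :=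
      min_eq_left <| (div_le_one (by positivity)).2 <| pow_le_pow_left₀ ht.le hta 2
    rw [hmin]
    exact le_sq_div_sq_mul_of_ratio_mono hratio ht hta
  · have hmin : min (t ^ 2 / a ^ 2) 1 = 1 :=
      min_eq_right <| (one_le_div (by positivity)).2 <| pow_le_pow_left₀ ha.le hat.le 2
    rw [hmin, one_mul, hsat t ⟨hat.le, htb⟩]

lemma le_min_sq_div_sq_mul_of_even (ha : 0 < a) (hPeven : ∀ x : ℝ, P (-x) = P x)
    (hP0 : P 0 = 0)
    (hratio : ∀ x y : ℝ, 0 < x → x ≤ y → y ≤ a → P x / x ^ 2 ≤ P y / y ^ 2)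
    (hsat : ∀ x ∈ Set.Icc a b, P x = P a) {x : ℝ} (hx : x ∈ Set.Icc (-b) b) :
    P x ≤ min (x ^ 2 / a ^ 2) 1 * P a := by
  have hPabs : P |x| = P x := by
    rcases abs_choice x with h | h <;> rw [h]
    exact hPeven x
  rw [← hPabs, ← sq_abs x]
  exact le_min_sq_div_sq_mul_of_nonneg ha hP0 hratio hsat (abs_nonneg x) (abs_le.2 hx)

end PointwiseBound

lemma integral_min_le_min_integral {α : Type*} [MeasurableSpace α] {μ : Measure α}
    [IsProbabilityMeasure μ] {g : α → ℝ} (hg : Integrable g μ) (c : ℝ) :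
    ∫ x, min (g x) c ∂μ ≤ min (∫ x, g x ∂μ) c := by
  have hmin : Integrable (fun x => min (g x) c) μ := hg.inf (integrable_const c)
  refine le_min (integral_mono hmin hg fun x => min_le_left _ _) ?_
  calc ∫ x, min (g x) c ∂μ ≤ ∫ _, c ∂μ :=
        integral_mono hmin (integrable_const c) fun x => min_le_right _ _
    _ = c := by simp

lemma Continuous.integrable_of_ae_mem_compact {X E : Type*} [TopologicalSpace X] [T2Space X]
    [MeasurableSpace X] [OpensMeasurableSpace X] [NormedAddCommGroup E] {μ : Measure X}
    [IsFiniteMeasureOnCompacts μ] {K : Set X} (hK : IsCompact K) (hμK : ∀ᵐ x ∂μ, x ∈ K)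
    {f : X → E} (hf : Continuous f) : Integrable f μ := by
  rw [← Measure.restrict_eq_self_of_ae_mem hμK]
  exact hf.continuousOn.integrableOn_compact hK

theorem max_WPT_upper_bound_general
    (A A' σ : ℝ) (hA' : 0 < A')
    (P : ℝ → ℝ)
    (hPeven : ∀ x : ℝ, P (-x) = P x)
    (hP0 : P 0 = 0) (hPA' : 0 ≤ P A')
    (hratio : ∀ x y : ℝ, 0 < x → x ≤ y → y ≤ A' → P x / x ^ 2 ≤ P y / y ^ 2)
    (hsat : ∀ x ∈ Set.Icc A' A, P x = P A')
    (μ : Measure ℝ) [IsProbabilityMeasure μ]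
    (hsupp : μ (Set.Icc (-A) A) = 1)
    (hAP : (∫ x, x ^ 2 ∂μ) ≤ σ ^ 2) :
    (∫ x, P x ∂μ) ≤ min (σ ^ 2 / A' ^ 2) 1 * P A' := by
  have hae : ∀ᵐ x ∂μ, x ∈ Set.Icc (-A) A := (mem_ae_iff_prob_eq_one measurableSet_Icc).2 hsupp
  have hpow : Integrable (fun x => x ^ 2 / A' ^ 2) μ :=
    (by fun_prop : Continuous fun x : ℝ => x ^ 2 / A' ^ 2).integrable_of_ae_mem_compact
      isCompact_Icc hae
  by_cases hP : Integrable P μ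
  · calc ∫ x, P x ∂μ ≤ ∫ x, min (x ^ 2 / A' ^ 2) 1 * P A' ∂μ :=
          integral_mono_ae hP ((hpow.inf (integrable_const 1)).mul_const _) <| hae.mono
            fun x hx => le_min_sq_div_sq_mul_of_even hA' hPeven hP0 hratio hsat hx
      _ = (∫ x, min (x ^ 2 / A' ^ 2) 1 ∂μ) * P A' := integral_mul_const _ _
      _ ≤ min ((∫ x, x ^ 2 ∂μ) / A' ^ 2) 1 * P A' := by
          rw [← integral_div]
          gcongr
          exact integral_min_le_min_integral hpow 1
      _ ≤ min (σ ^ 2 / A' ^ 2) 1 * P A' := by gcongr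
  · rw [integral_undef hP]
    positivity

/-- Upper-bound part of the maximum WPT theorem (Theorem 5): for any feasible
input distribution on `[-A, A]` with average power at most `σ²`, the average
harvested power is at most `min (σ²/A'², 1) · P(A')`. -/
theorem max_WPT_upper_bound
    (A A' σ : ℝ) (hA' : 0 < A') (hA'A : A' ≤ A) (hσ : 0 < σ)
    (P : ℝ → ℝ) (hPmeas : Measurable P)
    (hPeven : ∀ x : ℝ, P (-x) = P x)
    (hP0 : P 0 = 0) (hPA' : 0 ≤ P A')
    (hratio : ∀ x y : ℝ, 0 < x → x ≤ y → y ≤ A' → P x / x ^ 2 ≤ P y / y ^ 2)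
    (hsat : ∀ x ∈ Set.Icc A' A, P x = P A')
    (μ : Measure ℝ) [IsProbabilityMeasure μ]
    (hsupp : μ (Set.Icc (-A) A) = 1)
    (hAP : (∫ x, x ^ 2 ∂μ) ≤ σ ^ 2) :
    (∫ x, P x ∂μ) ≤ min (σ ^ 2 / A' ^ 2) 1 * P A' :=
  max_WPT_upper_bound_general A A' σ hA' P hPeven hP0 hPA' hratio hsat μ hsupp hAP
end

section
/- Define I₀(β) = (1/(2π)) ∫₀^{2π} exp(β cos θ) dθ for β ∈ ℝ. Let I_s > 0, I_Bv ≥ 0, B_v ∈ ℝ, η > 0, V_T > 0, R_s ≥ 0, R_L > 0, and β ∈ ℝ, and set c = (1 + R_s/R_L)/(η V_T). Then there exists a unique V ∈ ℝ satisfying I_s · (e^{-cV} · I₀(β) - 1) - I_Bv · e^{-B_v/(η V_T)} · (e^{cV} · I₀(β) - 1) = V / R_L. -/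
open MeasureTheory Real

/-- The modified Bessel function of the first kind and order zero,
`I₀(β) = (1/(2π)) ∫₀^{2π} exp(β cos θ) dθ`. -/
noncomputable def besselI0 (β : ℝ) : ℝ :=
  (1 / (2 * π)) * ∫ θ in (0 : ℝ)..(2 * π), Real.exp (β * Real.cos θ)

/-!
The left-hand side of the saturation equation is a continuous antitone function of `V`
(a decreasing forward exponential minus an increasing reverse exponential, since `I₀(β) > 0`),
while the right-hand side `V / R_L` is a continuous increasing bijection of `ℝ`. Their difference
is therefore a strictly monotone continuous map from `ℝ` onto `ℝ`, which has exactly one zero.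
-/

open Filter

theorem besselI0_pos (β : ℝ) : 0 < besselI0 β := by
  have hπ : 0 < π := pi_pos
  have hint : 0 < ∫ θ in (0 : ℝ)..(2 * π), exp (β * cos θ) :=
    intervalIntegral.intervalIntegral_pos_of_pos_on
      (Continuous.intervalIntegrable (by fun_prop) _ _) (fun _ _ ↦ exp_pos _) (by linarith)
  unfold besselI0
  positivity

theorem existsUnique_eq_of_antitone_of_strictMono {f g : ℝ → ℝ} (hf : Continuous f)
    (hf_anti : Antitone f) (hg : Continuous g) (hg_mono : StrictMono g)
    (hg_bot : Tendsto g atBot atBot) (hg_top : Tendsto g atTop atTop) :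
    ∃! x, f x = g x := by
  have hmono : StrictMono (g - f) := hg_mono.add_monotone hf_anti.neg
  have hbot : Tendsto (g - f) atBot atBot := by
    refine tendsto_atBot_mono' atBot ?_ (hg_bot.atBot_add (tendsto_const_nhds (x := -f 0)))
    filter_upwards [eventually_le_atBot 0] with x hx
    simp only [Pi.sub_apply]
    linarith [hf_anti hx]
  have htop : Tendsto (g - f) atTop atTop := by
    refine tendsto_atTop_mono' atTop ?_ (hg_top.atTop_add (tendsto_const_nhds (x := -f 0)))
    filter_upwards [eventually_ge_atTop 0] with x hx
    simp only [Pi.sub_apply]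
    linarith [hf_anti hx]
  obtain ⟨x, hx⟩ := (hg.sub hf).surjective htop hbot 0
  refine ⟨x, (sub_eq_zero.mp hx).symm, fun y hy ↦ hmono.injective ?_⟩
  simp only [Pi.sub_apply, hy, sub_self] at hx ⊢
  exact hx.symm

theorem antitone_exp_neg_sub_exp {a b c : ℝ} (ha : 0 ≤ a) (hb : 0 ≤ b) (hc : 0 ≤ c) :
    Antitone fun x ↦ a * exp (-(c * x)) - b * exp (c * x) := by
  intro x y hxy
  dsimp only
  gcongr

/-- Existence and uniqueness of the output DC voltage of the single-diode
rectifier in the semi-closed-form saturation equation (equation (5)). -/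
theorem rectifier_saturation_unique_solution
    (Is IBv Bv η VT Rs RL β : ℝ)
    (hIs : 0 < Is) (hIBv : 0 ≤ IBv) (hη : 0 < η) (hVT : 0 < VT)
    (hRs : 0 ≤ Rs) (hRL : 0 < RL) :
    ∃! V : ℝ,
      Is * (Real.exp (-((1 + Rs / RL) / (η * VT) * V)) * besselI0 β - 1) -
        IBv * Real.exp (-(Bv / (η * VT))) *
          (Real.exp ((1 + Rs / RL) / (η * VT) * V) * besselI0 β - 1) = V / RL := by
  set c := (1 + Rs / RL) / (η * VT)
  set K := IBv * exp (-(Bv / (η * VT)))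
  have hI0 := besselI0_pos β
  have hlhs : (fun V ↦ Is * (exp (-(c * V)) * besselI0 β - 1) - K * (exp (c * V) * besselI0 β - 1))
      = fun V ↦ (Is * besselI0 β * exp (-(c * V)) - K * besselI0 β * exp (c * V)) + (K - Is) := by
    ext V
    ring
  refine existsUnique_eq_of_antitone_of_strictMono (f := fun V ↦ _) (by fun_prop) ?_
    (by fun_prop) (strictMono_id.div_const hRL) (tendsto_id.atBot_div_const hRL)
    (tendsto_id.atTop_div_const hRL)
  rw [hlhs]
  refine Antitone.add_const (antitone_exp_neg_sub_exp ?_ ?_ ?_) _ <;> positivity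
end

section
/- Define I₀(β) = (1/(2π)) ∫₀^{2π} exp(β cos θ) dθ for β ∈ ℝ. Let I_s > 0, R_L > 0, R_s ≥ 0, η > 0, V_T > 0, and β ∈ ℝ. Then there exists a unique V ≥ 0 satisfying I₀(β) = (1 + V/(I_s R_L)) · exp( V·(1 + R_s/R_L)/(η V_T) ). Moreover V = 0 if and only if β = 0. -/
open MeasureTheory Real

/-!
Since `exp x ≥ 1 + x` with equality only at `x = 0`, and `cos` averages to zero over a period,
`I₀(β) ≥ 1` with equality exactly when `β = 0`. The right-hand side `(1 + V/k) exp(cV)` is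
continuous and strictly increasing on `[0, ∞)`, equals `1` at `V = 0` and is at least `1 + V/k`,
so by the intermediate value theorem it takes the value `I₀(β)` exactly once there, at `V = 0`
precisely when `I₀(β) = 1`.
-/

lemma integral_one_add_mul_cos_two_pi (β : ℝ) :
    ∫ θ in (0 : ℝ)..(2 * π), (1 + β * cos θ) = 2 * π := by
  rw [intervalIntegral.integral_add intervalIntegrable_const
    ((by fun_prop : Continuous fun θ => β * cos θ).intervalIntegrable _ _)]
  simp [integral_cos]

lemma besselI0_zero : besselI0 0 = 1 := by
  simp [besselI0]
  field_simp

lemma one_lt_besselI0 {β : ℝ} (hβ : β ≠ 0) : 1 < besselI0 β := by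
  have hlt : ∫ θ in (0 : ℝ)..(2 * π), (1 + β * cos θ) <
      ∫ θ in (0 : ℝ)..(2 * π), exp (β * cos θ) := by
    refine intervalIntegral.integral_lt_integral_of_continuousOn_of_le_of_exists_lt
      (by positivity) (by fun_prop) (by fun_prop)
      (fun θ _ => by linarith [add_one_le_exp (β * cos θ)]) ⟨0, ⟨le_rfl, by positivity⟩, ?_⟩
    simpa [add_comm] using add_one_lt_exp hβ
  rw [integral_one_add_mul_cos_two_pi] at hlt
  rw [besselI0, one_div, ← div_eq_inv_mul, one_lt_div (by positivity)]
  exact hlt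

lemma one_le_besselI0 (β : ℝ) : 1 ≤ besselI0 β := by
  rcases eq_or_ne β 0 with rfl | hβ
  · exact besselI0_zero.ge
  · exact (one_lt_besselI0 hβ).le

lemma besselI0_eq_one_iff {β : ℝ} : besselI0 β = 1 ↔ β = 0 :=
  ⟨fun h => by_contra fun hβ => (one_lt_besselI0 hβ).ne' h, fun h => h ▸ besselI0_zero⟩

section OneAddDivMulExp

variable {k c : ℝ}

lemma strictMonoOn_one_add_div_mul_exp (hk : 0 < k) (hc : 0 ≤ c) :
    StrictMonoOn (fun V => (1 + V / k) * exp (V * c)) (Set.Ici 0) := by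
  intro V _ W (hW : 0 ≤ W) hVW
  have hlin : 1 + V / k < 1 + W / k := by gcongr
  have hexp : exp (V * c) ≤ exp (W * c) := by gcongr
  exact mul_lt_mul hlin hexp (exp_pos _) (by positivity)

lemma exists_nonneg_one_add_div_mul_exp_eq (hk : 0 < k) (hc : 0 ≤ c) {y : ℝ} (hy : 1 ≤ y) :
    ∃ V, 0 ≤ V ∧ (1 + V / k) * exp (V * c) = y := by
  -- at `M = (y - 1) k` the linear factor alone already reaches `y`
  set M := (y - 1) * k
  have hM : 0 ≤ M := mul_nonneg (by linarith) hk.le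
  have hlin : 1 + M / k = y := by field_simp [M]; ring
  have hyM : y ≤ (1 + M / k) * exp (M * c) := by
    rw [hlin]
    exact le_mul_of_one_le_right (by linarith) (one_le_exp (by positivity))
  obtain ⟨V, hV, hVy⟩ := intermediate_value_Icc hM (f := fun V => (1 + V / k) * exp (V * c))
    (by fun_prop) ⟨by simpa using hy, hyM⟩
  exact ⟨V, hV.1, hVy⟩

end OneAddDivMulExp

/-- Unique solvability of the low-input-power rectifier equation
(equation (7)); the unique nonnegative solution is zero iff `β = 0`. -/
theorem rectifier_low_power_unique_solution
    (Is RL Rs η VT β : ℝ)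
    (hIs : 0 < Is) (hRL : 0 < RL) (hRs : 0 ≤ Rs) (hη : 0 < η) (hVT : 0 < VT) :
    (∃! V : ℝ, 0 ≤ V ∧
        besselI0 β = (1 + V / (Is * RL)) * Real.exp (V * (1 + Rs / RL) / (η * VT))) ∧
    (∀ V : ℝ, 0 ≤ V →
        besselI0 β = (1 + V / (Is * RL)) * Real.exp (V * (1 + Rs / RL) / (η * VT)) →
        (V = 0 ↔ β = 0)) := by
  have hk : 0 < Is * RL := mul_pos hIs hRL
  have hc : 0 ≤ (1 + Rs / RL) / (η * VT) := by positivity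
  simp only [mul_div_assoc]
  have hinj := (strictMonoOn_one_add_div_mul_exp hk hc).injOn
  obtain ⟨V, hV, hVeq⟩ := exists_nonneg_one_add_div_mul_exp_eq hk hc (one_le_besselI0 β)
  refine ⟨⟨V, ⟨hV, hVeq.symm⟩, fun W ⟨hW, hWeq⟩ => hinj hW hV (hWeq.symm.trans hVeq.symm)⟩,
    fun W hW hWeq => ?_⟩
  rw [← besselI0_eq_one_iff (β := β), hWeq, ← hinj.eq_iff hW (Set.mem_Ici.2 le_rfl)]
  simp
end

section
/- Let σ > 0 and h ∈ ℂ with h ≠ 0. Let r be a nonnegative real random variable, Θ uniformly distributed on [0, 2π), and N a complex random variable whose real and imaginary parts are independent real Gaussians with mean 0 and variance σ², where r, Θ, N are mutually independent. Set Y = h · r · e^{iΘ} + N. Then the argument of Y is uniformly distributed on its range and is independent of |Y|; equivalently, the joint law of (|Y|, arg Y) is the product of the law of |Y| and the uniform distribution on (-π, π]. -/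
/-!
The law of `Y` is invariant under every rotation `z ↦ e^{iφ} z`: a rotated `e^{iΘ}` is still
uniform on the circle, a rotated `N` has the same radial Gaussian density, and both enter `Y`
linearly and independently of `r`. Since `N` has a density, this law has no atom at `0`.
A rotation-invariant law `ν` is the law of `e^{iθ} z` with `θ` uniform and `z ∼ ν` independent.
In these coordinates the modulus is `|z|` and the argument is `θ + arg z` reduced mod `2π`,
which is uniform on `(-π, π]` for every fixed `z`; hence argument and modulus are independent.
-/

open MeasureTheory Real ProbabilityTheory
open scoped ENNReal NNReal
open Set Function

section Mixture

variable {α β γ : Type*} [MeasurableSpace α] [MeasurableSpace β] [MeasurableSpace γ]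
  {μ : Measure α} {ν : Measure β} [SFinite ν] {F : α → β → γ}

lemma map_uncurry_prod_apply (hF : Measurable (uncurry F)) {s : Set γ}
    (hs : MeasurableSet s) :
    (μ.prod ν).map (uncurry F) s = ∫⁻ a, ν.map (F a) s ∂μ := by
  rw [Measure.map_apply hF hs, Measure.prod_apply (hF hs)]
  refine lintegral_congr fun a => ?_
  have hFa : Measurable (F a) := hF.comp measurable_prodMk_left
  rw [Measure.map_apply hFa hs]
  rfl

lemma nullSingletonClass_map_uncurry_prod [MeasurableSingletonClass γ]
    (hF : Measurable (uncurry F)) (h : ∀ a, NullSingletonClass (ν.map (F a))) :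
    NullSingletonClass ((μ.prod ν).map (uncurry F)) :=
  ⟨fun z => by simp [map_uncurry_prod_apply hF (measurableSet_singleton z)]⟩

lemma smulInvariantMeasure_map_uncurry_prod {M : Type*} [SMul M γ] [MeasurableConstSMul M γ]
    (hF : Measurable (uncurry F)) (h : ∀ a, SMulInvariantMeasure M γ (ν.map (F a))) :
    SMulInvariantMeasure M γ ((μ.prod ν).map (uncurry F)) :=
  ⟨fun c s hs => by
    simp only [map_uncurry_prod_apply hF hs,
      map_uncurry_prod_apply hF (hs.preimage (measurable_const_smul c)),
      SMulInvariantMeasure.measure_preimage_smul c hs]⟩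

lemma map_smul_prod_eq_self {M : Type*} [SMul M β] [MeasurableConstSMul M β]
    [SMulInvariantMeasure M β ν] {U : Measure α} [IsProbabilityMeasure U] {e : α → M}
    (he : Measurable fun p : α × β => e p.1 • p.2) :
    (U.prod ν).map (fun p => e p.1 • p.2) = ν := by
  ext s hs
  rw [show (fun p : α × β => e p.1 • p.2) = uncurry fun a b => e a • b from rfl,
    map_uncurry_prod_apply he hs]
  simp [MeasureTheory.map_smul]

end Mixture

lemma nullSingletonClass_map_of_injective {α β : Type*} [MeasurableSpace α] [MeasurableSpace β]
    {ν : Measure α} [NullSingletonClass ν] {f : α → β} (hf : Measurable f)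
    (hinj : Injective f) [MeasurableSingletonClass β] : NullSingletonClass (ν.map f) :=
  ⟨fun z => by
    rw [Measure.map_apply hf (measurableSet_singleton z)]
    exact (subsingleton_singleton.preimage hinj).measure_zero ν⟩

section Phase

lemma measurable_toIocMod_two_pi : Measurable (toIocMod two_pi_pos (-π)) := by
  rw [show toIocMod two_pi_pos (-π) = fun x : ℝ => (Complex.exp (x * Complex.I)).arg from
    funext fun x => (Complex.arg_exp_mul_I x).symm]
  exact Complex.measurable_arg.comp (by fun_prop)

local instance : Fact (0 < 2 * π) := ⟨two_pi_pos⟩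

lemma map_toIocMod_add_volume_Ico (c : ℝ) :
    (volume.restrict (Ico 0 (2 * π))).map (fun θ => toIocMod two_pi_pos (-π) (θ + c)) =
      volume.restrict (Ioc (-π) π) := by
  have hequiv : Measurable (AddCircle.equivIoc (2 * π) (-π)) :=
    (AddCircle.measurableEquivIoc (2 * π) (-π)).measurable
  have hIocMap : volume.map (Subtype.val ∘ AddCircle.equivIoc (2 * π) (-π)) =
      volume.restrict (Ioc (-π) π) := by
    rw [← Measure.map_map measurable_subtype_coe hequiv,
      (AddCircle.measurePreserving_equivIoc (2 * π)).map_eq,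
      map_comap_subtype_coe measurableSet_Ioc, show -π + 2 * π = π by ring]
  have hmk : (volume.restrict (Ico 0 (2 * π))).map ((↑) : ℝ → AddCircle (2 * π)) = volume := by
    have := (AddCircle.measurePreserving_mk (2 * π) 0).map_eq
    rwa [zero_add, ← Measure.restrict_congr_set Ico_ae_eq_Ioc] at this
  have hwrap : (fun θ => toIocMod two_pi_pos (-π) (θ + c)) =
      (Subtype.val ∘ AddCircle.equivIoc (2 * π) (-π)) ∘ (fun q => (c : AddCircle (2 * π)) + q) ∘
        ((↑) : ℝ → AddCircle (2 * π)) := by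
    funext θ
    simp only [comp_apply, ← AddCircle.coe_add, add_comm c]
    exact congrArg Subtype.val (QuotientAddGroup.equivIocMod_coe two_pi_pos (-π) (θ + c)).symm
  rw [hwrap, ← Measure.map_map (measurable_subtype_coe.comp hequiv)
      ((measurable_const_add _).comp AddCircle.measurable_mk'),
    ← Measure.map_map (measurable_const_add _) AddCircle.measurable_mk', hmk,
    (measurePreserving_add_left volume _).map_eq, hIocMap]

end Phase

instance isProbabilityMeasure_uniform_Ico :
    IsProbabilityMeasure ((ENNReal.ofReal (2 * π))⁻¹ • volume.restrict (Ico 0 (2 * π))) :=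
  ⟨by
    rw [Measure.smul_apply, Measure.restrict_apply_univ, Real.volume_Ico, sub_zero, smul_eq_mul]
    exact ENNReal.inv_mul_cancel (ENNReal.ofReal_pos.2 two_pi_pos).ne' ENNReal.ofReal_ne_top⟩

lemma measurable_coe_circleExp : Measurable fun θ : ℝ => (Circle.exp θ : ℂ) := by
  simp only [Circle.coe_exp]
  fun_prop

lemma measurable_circleExp_smul : Measurable fun p : ℝ × ℂ => Circle.exp p.1 • p.2 := by
  simp only [Circle.smul_def, Circle.coe_exp, smul_eq_mul]
  fun_prop

lemma map_circleExp_add_uniform (φ : ℝ) :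
    ((ENNReal.ofReal (2 * π))⁻¹ • volume.restrict (Ico 0 (2 * π))).map
        (fun θ => (Circle.exp (θ + φ) : ℂ)) =
      ((ENNReal.ofReal (2 * π))⁻¹ • volume.restrict (Ioc (-π) π)).map
        (fun θ => (Circle.exp θ : ℂ)) := by
  have hwrap : Measurable fun θ => toIocMod two_pi_pos (-π) (θ + φ) :=
    measurable_toIocMod_two_pi.comp (measurable_add_const φ)
  have hper : (fun θ => (Circle.exp (θ + φ) : ℂ)) =
      (fun θ => (Circle.exp θ : ℂ)) ∘ fun θ => toIocMod two_pi_pos (-π) (θ + φ) := by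
    funext θ
    rw [comp_apply, ← self_sub_toIocDiv_zsmul, Circle.periodic_exp.sub_zsmul_eq]
  rw [hper, ← Measure.map_map measurable_coe_circleExp hwrap, Measure.map_smul,
    map_toIocMod_add_volume_Ico]

instance smulInvariantMeasure_map_circleExp_uniform :
    SMulInvariantMeasure Circle ℂ (((ENNReal.ofReal (2 * π))⁻¹ •
      volume.restrict (Ico 0 (2 * π))).map fun θ => (Circle.exp θ : ℂ)) := by
  refine ((smulInvariantMeasure_tfae Circle _).out 0 5).2 fun c => ?_
  obtain ⟨φ, rfl⟩ := Circle.exp_surjective c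
  rw [Measure.map_map (measurable_const_smul _) measurable_coe_circleExp]
  have hrot : ((Circle.exp φ • ·) ∘ fun θ : ℝ => (Circle.exp θ : ℂ)) =
      fun θ => (Circle.exp (θ + φ) : ℂ) := by
    funext θ
    simp [Circle.smul_def, Circle.exp_add, mul_comm]
  rw [hrot, map_circleExp_add_uniform, ← map_circleExp_add_uniform 0]
  simp only [add_zero]

lemma Circle.arg_exp_smul (θ : ℝ) {z : ℂ} (hz : z ≠ 0) :
    (Circle.exp θ • z).arg = toIocMod two_pi_pos (-π) (θ + z.arg) := by
  have hpolar : Circle.exp θ • z =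
      ‖z‖ * (Complex.cos ↑(θ + z.arg) + Complex.sin ↑(θ + z.arg) * Complex.I) := by
    conv_lhs => rw [← Complex.norm_mul_exp_arg_mul_I z]
    rw [Circle.smul_def, Circle.coe_exp, smul_eq_mul, ← Complex.exp_mul_I, Complex.ofReal_add,
      mul_left_comm, ← Complex.exp_add, ← add_mul]
  rw [hpolar, Complex.arg_mul_cos_add_sin_mul_I_eq_toIocMod (norm_pos_iff.2 hz)]

theorem map_norm_arg_of_smulInvariantMeasure (ν : Measure ℂ) [SFinite ν]
    [SMulInvariantMeasure Circle ℂ ν] (h0 : ν {0} = 0) :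
    ν.map (fun z => (‖z‖, z.arg)) =
      (ν.map (‖·‖)).prod ((ENNReal.ofReal (2 * π))⁻¹ • volume.restrict (Ioc (-π) π)) := by
  set U : Measure ℝ := (ENNReal.ofReal (2 * π))⁻¹ • volume.restrict (Ico 0 (2 * π))
  set wrap : ℂ → ℝ → ℝ := fun z θ => toIocMod two_pi_pos (-π) (θ + z.arg)
  have hwrap : Measurable (uncurry wrap) :=
    measurable_toIocMod_two_pi.comp
      (measurable_snd.add (Complex.measurable_arg.comp measurable_fst))
  have hne : ∀ᵐ p ∂U.prod ν, p.2 ≠ 0 := by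
    have hzero : {p : ℝ × ℂ | ¬p.2 ≠ 0} = univ ×ˢ {0} := by ext; simp
    rw [ae_iff, hzero, Measure.prod_prod, h0, mul_zero]
  have hskew : MeasurePreserving (fun p : ℂ × ℝ => (‖p.1‖, wrap p.1 p.2)) (ν.prod U)
      ((ν.map (‖·‖)).prod ((ENNReal.ofReal (2 * π))⁻¹ • volume.restrict (Ioc (-π) π))) :=
    (measurable_norm.measurePreserving ν).skew_product hwrap <| .of_forall fun z => by
      rw [Measure.map_smul, map_toIocMod_add_volume_Ico]
  calc ν.map (fun z => (‖z‖, z.arg))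
      = ((U.prod ν).map fun p => Circle.exp p.1 • p.2).map (fun z => (‖z‖, z.arg)) := by
        rw [map_smul_prod_eq_self measurable_circleExp_smul]
    _ = (U.prod ν).map fun p => (‖p.2‖, wrap p.2 p.1) := by
        rw [Measure.map_map (by fun_prop) measurable_circleExp_smul]
        refine Measure.map_congr (hne.mono fun p hp => ?_)
        simp only [comp_apply, Circle.norm_smul, Circle.arg_exp_smul _ hp, wrap]
    _ = (ν.prod U).map fun p => (‖p.1‖, wrap p.1 p.2) := by
        rw [← Measure.prod_swap, Measure.map_map (by fun_prop) measurable_swap]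
        rfl
    _ = _ := hskew.map_eq

lemma map_withDensity_comp {α β : Type*} [MeasurableSpace α] [MeasurableSpace β]
    {μ : Measure α} {ν : Measure β} (e : α ≃ᵐ β) (he : MeasurePreserving e μ ν)
    {f : β → ℝ≥0∞} (hf : Measurable f) :
    (μ.withDensity (f ∘ e)).map e = ν.withDensity f := by
  ext s hs
  rw [Measure.map_apply e.measurable hs, withDensity_apply _ hs,
    withDensity_apply _ (e.measurable hs), ← he.map_eq, setLIntegral_map hs hf e.measurable]
  rfl

lemma smulInvariantMeasure_withDensity {G α : Type*} [MeasurableSpace α] [Group G]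
    [MulAction G α] [MeasurableConstSMul G α] (μ : Measure α) [SMulInvariantMeasure G α μ]
    {f : α → ℝ≥0∞} (hf : Measurable f) (hinv : ∀ (c : G) x, f (c • x) = f x) :
    SMulInvariantMeasure G α (μ.withDensity f) := by
  refine ((smulInvariantMeasure_tfae G _).out 0 5).2 fun c => ?_
  have hcomp : f ∘ MeasurableEquiv.smul c = f := funext (hinv c)
  have := map_withDensity_comp (MeasurableEquiv.smul c) (measurePreserving_smul c μ) hf
  rwa [hcomp] at this

instance smulInvariantMeasure_volume_complex : SMulInvariantMeasure Circle ℂ volume :=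
  ((smulInvariantMeasure_tfae Circle _).out 0 5).2 fun c => by
    have h := (rotation c).measurePreserving.map_eq
    rwa [show ⇑(rotation c) = (c • ·) from funext (rotation_apply c)] at h

lemma gaussianPDF_re_mul_gaussianPDF_im (v : ℝ≥0) (z : ℂ) :
    gaussianPDF 0 v z.re * gaussianPDF 0 v z.im =
      ENNReal.ofReal ((√(2 * π * v))⁻¹ ^ 2 * rexp (-‖z‖ ^ 2 / (2 * v))) := by
  simp only [gaussianPDF, gaussianPDFReal]
  rw [← ENNReal.ofReal_mul (by positivity)]
  congr 1
  rw [Complex.sq_norm, Complex.normSq_apply,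
    show -(z.re * z.re + z.im * z.im) / (2 * (v : ℝ)) =
      -(z.re - 0) ^ 2 / (2 * v) + -(z.im - 0) ^ 2 / (2 * v) by ring, Real.exp_add]
  ring

lemma complexGaussian_eq_withDensity {v : ℝ≥0} (hv : v ≠ 0) :
    ((gaussianReal 0 v).prod (gaussianReal 0 v)).map Complex.measurableEquivRealProd.symm =
      volume.withDensity fun z => gaussianPDF 0 v z.re * gaussianPDF 0 v z.im := by
  rw [gaussianReal_of_var_ne_zero 0 hv,
    prod_withDensity (measurable_gaussianPDF 0 v) (measurable_gaussianPDF 0 v),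
    ← Measure.volume_eq_prod]
  have hcomp : (fun p : ℝ × ℝ => gaussianPDF 0 v p.1 * gaussianPDF 0 v p.2) =
      (fun z : ℂ => gaussianPDF 0 v z.re * gaussianPDF 0 v z.im) ∘
        Complex.measurableEquivRealProd.symm := rfl
  rw [hcomp]
  exact map_withDensity_comp _ (Complex.volume_preserving_equiv_real_prod.symm _)
    (((measurable_gaussianPDF 0 v).comp Complex.measurable_re).mul
      ((measurable_gaussianPDF 0 v).comp Complex.measurable_im))

lemma smulInvariantMeasure_complexGaussian {v : ℝ≥0} (hv : v ≠ 0) :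
    SMulInvariantMeasure Circle ℂ
      (((gaussianReal 0 v).prod (gaussianReal 0 v)).map Complex.measurableEquivRealProd.symm) := by
  rw [complexGaussian_eq_withDensity hv]
  refine smulInvariantMeasure_withDensity _ (by fun_prop) fun c z => ?_
  simp only [gaussianPDF_re_mul_gaussianPDF_im, Circle.norm_smul]

lemma nullSingletonClass_complexGaussian {v : ℝ≥0} (hv : v ≠ 0) :
    NullSingletonClass
      (((gaussianReal 0 v).prod (gaussianReal 0 v)).map Complex.measurableEquivRealProd.symm) := by
  rw [complexGaussian_eq_withDensity hv]
  infer_instance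

section MulAdd

variable {α : Type*} [MeasurableSpace α] (μ : Measure α) (κ ν : Measure ℂ) [SFinite κ] [SFinite ν]
  {g : α → ℂ}

variable [SMulInvariantMeasure Circle ℂ κ] [SMulInvariantMeasure Circle ℂ ν] in
lemma smulInvariantMeasure_map_mul_add_prod (w : ℂ) :
    SMulInvariantMeasure Circle ℂ ((κ.prod ν).map fun p => w * p.1 + p.2) := by
  refine ((smulInvariantMeasure_tfae Circle _).out 0 5).2 fun c => ?_
  have hrot : (c • ·) ∘ (fun p : ℂ × ℂ => w * p.1 + p.2) =
      (fun p => w * p.1 + p.2) ∘ Prod.map (c • ·) (c • ·) := by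
    funext p
    simp only [comp_apply, Prod.map_fst, Prod.map_snd, Circle.smul_def, smul_eq_mul]
    ring
  rw [Measure.map_map (measurable_const_smul c) (by fun_prop), hrot,
    ← Measure.map_map (by fun_prop) ((measurable_const_smul c).prodMap (measurable_const_smul c)),
    ← Measure.map_prod_map _ _ (measurable_const_smul c) (measurable_const_smul c),
    MeasureTheory.map_smul, MeasureTheory.map_smul]

variable [SMulInvariantMeasure Circle ℂ κ] [SMulInvariantMeasure Circle ℂ ν] in
lemma smulInvariantMeasure_map_mul_add (hg : Measurable g) :
    SMulInvariantMeasure Circle ℂ ((μ.prod (κ.prod ν)).map fun x => g x.1 * x.2.1 + x.2.2) :=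
  smulInvariantMeasure_map_uncurry_prod (F := fun a (p : ℂ × ℂ) => g a * p.1 + p.2)
    (by fun_prop) fun a => smulInvariantMeasure_map_mul_add_prod κ ν (g a)

lemma nullSingletonClass_map_mul_add [NullSingletonClass ν] (hg : Measurable g) :
    NullSingletonClass ((μ.prod (κ.prod ν)).map fun x => g x.1 * x.2.1 + x.2.2) :=
  nullSingletonClass_map_uncurry_prod (F := fun a (p : ℂ × ℂ) => g a * p.1 + p.2) (by fun_prop)
    fun a => nullSingletonClass_map_uncurry_prod (F := fun u n : ℂ => g a * u + n) (by fun_prop)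
      fun _ => nullSingletonClass_map_of_injective (measurable_const_add _) (add_right_injective _)

end MulAdd

lemma Complex.map_eq_map_re_im {Ω : Type*} [MeasurableSpace Ω] {P : Measure Ω} {N : Ω → ℂ}
    (hN : Measurable N) :
    P.map N = (P.map fun ω => ((N ω).re, (N ω).im)).map Complex.measurableEquivRealProd.symm := by
  rw [Measure.map_map Complex.measurableEquivRealProd.symm.measurable (by fun_prop)]
  rfl

lemma map_mul_exp_add_of_map_eq_prod {Ω α : Type*} [MeasurableSpace Ω] [MeasurableSpace α]
    {P : Measure Ω} [SFinite P] {X : Ω → α} {Θ : Ω → ℝ} {N : Ω → ℂ} (hX : Measurable X)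
    (hΘ : Measurable Θ) (hN : Measurable N) {g : α → ℂ} (hg : Measurable g)
    (hindep : P.map (fun ω => (X ω, Θ ω, N ω)) = (P.map X).prod ((P.map Θ).prod (P.map N))) :
    P.map (fun ω => g (X ω) * Complex.exp (Complex.I * Θ ω) + N ω) =
      ((P.map X).prod (((P.map Θ).map fun θ => (Circle.exp θ : ℂ)).prod (P.map N))).map
        fun x => g x.1 * x.2.1 + x.2.2 := by
  have hE := measurable_coe_circleExp
  have hprod : (P.map X).prod (((P.map Θ).map fun θ => (Circle.exp θ : ℂ)).prod (P.map N)) =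
      ((P.map X).prod ((P.map Θ).prod (P.map N))).map
        (Prod.map id (Prod.map (fun θ => (Circle.exp θ : ℂ)) id)) := by
    rw [← Measure.map_prod_map _ _ measurable_id (hE.prodMap measurable_id),
      ← Measure.map_prod_map _ _ hE measurable_id, Measure.map_id, Measure.map_id]
  rw [hprod, Measure.map_map (by fun_prop) (measurable_id.prodMap (hE.prodMap measurable_id)),
    ← hindep, Measure.map_map (by fun_prop) (by fun_prop)]
  congr 1
  funext ω
  simp [Circle.coe_exp, mul_comm]

theorem output_phase_uniform_and_indep_general
    (σ : ℝ) (hσ : 0 < σ) (h : ℂ)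
    {Ω : Type*} [MeasurableSpace Ω] (P : Measure Ω) [IsProbabilityMeasure P]
    (r : Ω → ℝ) (hr : Measurable r)
    (Θ : Ω → ℝ) (hΘ : Measurable Θ)
    (hΘunif : Measure.map Θ P =
      (ENNReal.ofReal (2 * π))⁻¹ • volume.restrict (Set.Ico 0 (2 * π)))
    (N : Ω → ℂ) (hN : Measurable N)
    (hNlaw : Measure.map (fun ω => ((N ω).re, (N ω).im)) P =
      (gaussianReal 0 (σ ^ 2).toNNReal).prod (gaussianReal 0 (σ ^ 2).toNNReal))
    (hindep : Measure.map (fun ω => (r ω, Θ ω, N ω)) P =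
      (Measure.map r P).prod ((Measure.map Θ P).prod (Measure.map N P)))
    (Y : Ω → ℂ)
    (hY : ∀ ω, Y ω = h * (r ω : ℂ) * Complex.exp (Complex.I * (Θ ω : ℂ)) + N ω) :
    Measure.map (fun ω => (‖Y ω‖, Complex.arg (Y ω))) P =
      (Measure.map (fun ω => ‖Y ω‖) P).prod
        ((ENNReal.ofReal (2 * π))⁻¹ • volume.restrict (Set.Ioc (-π) π)) := by
  have hv : (σ ^ 2).toNNReal ≠ 0 := by simpa using hσ.ne'
  have hNgauss := Complex.map_eq_map_re_im (P := P) hN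
  rw [hNlaw] at hNgauss
  have : SMulInvariantMeasure Circle ℂ (P.map N) := by
    rw [hNgauss]; exact smulInvariantMeasure_complexGaussian hv
  have : NullSingletonClass (P.map N) := by
    rw [hNgauss]; exact nullSingletonClass_complexGaussian hv
  have : SMulInvariantMeasure Circle ℂ ((P.map Θ).map fun θ => (Circle.exp θ : ℂ)) := by
    rw [hΘunif]; infer_instance
  have hg : Measurable fun a : ℝ => h * a := by fun_prop
  have hlawY := map_mul_exp_add_of_map_eq_prod hr hΘ hN hg hindep
  rw [← funext hY] at hlawY
  have : SMulInvariantMeasure Circle ℂ (P.map Y) := by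
    rw [hlawY]; exact smulInvariantMeasure_map_mul_add _ _ _ hg
  have : NullSingletonClass (P.map Y) := by
    rw [hlawY]; exact nullSingletonClass_map_mul_add _ _ _ hg
  have hYm : Measurable Y := by
    rw [funext hY]; fun_prop
  rw [show (fun ω => (‖Y ω‖, (Y ω).arg)) = (fun z : ℂ => (‖z‖, z.arg)) ∘ Y from rfl,
    show (fun ω => ‖Y ω‖) = (‖·‖) ∘ Y from rfl, ← Measure.map_map (by fun_prop) hYm,
    ← Measure.map_map (by fun_prop) hYm,
    map_norm_arg_of_smulInvariantMeasure _ (measure_singleton 0)]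

/-- Lemma 2 / Appendix G (equation (G.5)): for the complex AWGN channel
`Y = h·r·e^{iΘ} + N` with `r, Θ, N` mutually independent, `Θ` uniform on
`[0, 2π)`, and `N` circularly symmetric complex Gaussian with per-component
variance `σ²`, the phase of `Y` is uniformly distributed and independent of
the magnitude of `Y`: the joint law of `(|Y|, arg Y)` is the product of the
law of `|Y|` and the uniform distribution on `(-π, π]`. -/
theorem output_phase_uniform_and_indep
    (σ : ℝ) (hσ : 0 < σ) (h : ℂ) (hh : h ≠ 0)
    {Ω : Type*} [MeasurableSpace Ω] (P : Measure Ω) [IsProbabilityMeasure P]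
    (r : Ω → ℝ) (hr : Measurable r) (hrnonneg : ∀ ω, 0 ≤ r ω)
    (Θ : Ω → ℝ) (hΘ : Measurable Θ)
    (hΘunif : Measure.map Θ P =
      (ENNReal.ofReal (2 * π))⁻¹ • volume.restrict (Set.Ico 0 (2 * π)))
    (N : Ω → ℂ) (hN : Measurable N)
    (hNlaw : Measure.map (fun ω => ((N ω).re, (N ω).im)) P =
      (gaussianReal 0 (σ ^ 2).toNNReal).prod (gaussianReal 0 (σ ^ 2).toNNReal))
    (hindep : Measure.map (fun ω => (r ω, Θ ω, N ω)) P =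
      (Measure.map r P).prod ((Measure.map Θ P).prod (Measure.map N P)))
    (Y : Ω → ℂ)
    (hY : ∀ ω, Y ω = h * (r ω : ℂ) * Complex.exp (Complex.I * (Θ ω : ℂ)) + N ω) :
    Measure.map (fun ω => (‖Y ω‖, Complex.arg (Y ω))) P =
      (Measure.map (fun ω => ‖Y ω‖) P).prod
        ((ENNReal.ofReal (2 * π))⁻¹ • volume.restrict (Set.Ioc (-π) π)) :=
  output_phase_uniform_and_indep_general σ hσ h P r hr Θ hΘ hΘunif N hN hNlaw hindep Y hY
end

section
/- Define I₀(β) = (1/(2π)) ∫₀^{2π} exp(β cos θ) dθ for β ∈ ℝ. Then for every z ∈ ℝ and every n ∈ ℕ: ∫₀^∞ e^{-ν - z²/2} · I₀(z·√(2ν)) · ν^n dν = n! · ∑_{m=0}^{n} (n choose m) · (z²/2)^m / m!. -/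
/-! Expanding `exp (β cos θ)` and integrating termwise, only the even moments of `cos` survive, so
`I₀(β) = ∑ (β²/4)^k / (k!)²`. With `β = z√(2ν)` and `x = z²/2` the integrand becomes a nonnegative
series of Gamma integrands `e^{-ν} ν^{n+k}`, which integrates termwise to `e^{-x} ∑ (n+k)! x^k / (k!)²`.
Writing `(n+k)!/(k!)² = n! C(n+k,k)/k!` and splitting `C(n+k,k)` by Vandermonde's identity exhibits
this series as the Cauchy product of `e^x` with `n! ∑ C(n,m) x^m / m!`. -/

open MeasureTheory Real

open Nat Finset

lemma Real.hasSum_pow_div_factorial (x : ℝ) : HasSum (fun n ↦ x ^ n / n !) (exp x) := by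
  rw [Real.exp_eq_exp_ℝ]
  exact NormedSpace.expSeries_div_hasSum_exp x

lemma hasSum_intervalIntegral_exp {f : ℝ → ℝ} (hf : Continuous f) (a b : ℝ) :
    HasSum (fun j ↦ ∫ t in a..b, f t ^ j / j !) (∫ t in a..b, exp (f t)) := by
  refine intervalIntegral.hasSum_integral_of_dominated_convergence (fun j t ↦ |f t| ^ j / j !)
    (fun j ↦ (by fun_prop : Continuous fun t ↦ f t ^ j / j !).aestronglyMeasurable)
    (fun j ↦ .of_forall fun t _ ↦ by simp)
    (.of_forall fun t _ ↦ Real.summable_pow_div_factorial _) ?_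
    (.of_forall fun t _ ↦ Real.hasSum_pow_div_factorial (f t))
  simp only [fun t ↦ (Real.hasSum_pow_div_factorial |f t|).tsum_eq]
  exact (by fun_prop : Continuous fun t ↦ exp |f t|).intervalIntegrable a b

lemma integral_cos_pow_even_zero_two_pi (k : ℕ) :
    ∫ θ in (0 : ℝ)..(2 * π), cos θ ^ (2 * k) = 2 * π * (2 * k)! / (4 ^ k * (k ! : ℝ) ^ 2) := by
  induction k with
  | zero => simp
  | succ k ih =>
    rw [mul_add_one, integral_cos_pow, ih, sin_two_pi, sin_zero, factorial_succ (2 * k + 1),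
      factorial_succ (2 * k), factorial_succ k]
    push_cast
    field_simp
    ring

lemma integral_cos_pow_odd_zero_two_pi (k : ℕ) :
    ∫ θ in (0 : ℝ)..(2 * π), cos θ ^ (2 * k + 1) = 0 := by
  induction k with
  | zero => simp
  | succ k ih => rw [show 2 * (k + 1) + 1 = 2 * k + 1 + 2 by ring, integral_cos_pow, ih]; simp

lemma hasSum_besselI0 (β : ℝ) :
    HasSum (fun k ↦ (β ^ 2 / 4) ^ k / (k ! : ℝ) ^ 2) (besselI0 β) := by
  have hterm (j : ℕ) : ∫ θ in (0 : ℝ)..(2 * π), (β * cos θ) ^ j / j ! =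
      β ^ j / j ! * ∫ θ in (0 : ℝ)..(2 * π), cos θ ^ j := by
    simp only [mul_pow, ← intervalIntegral.integral_const_mul]
    congr 1 with θ
    ring
  have hseries := hasSum_intervalIntegral_exp (f := fun θ ↦ β * cos θ) (by fun_prop) 0 (2 * π)
  simp only [hterm] at hseries
  have hodd : ∀ j ∉ Set.range (2 * ·), β ^ j / j ! * ∫ θ in (0 : ℝ)..(2 * π), cos θ ^ j = 0 := by
    intro j hj
    obtain ⟨k, rfl⟩ : Odd j := Nat.not_even_iff_odd.mp fun ⟨k, hk⟩ ↦ hj ⟨k, by dsimp only; omega⟩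
    rw [integral_cos_pow_odd_zero_two_pi, mul_zero]
  have heven := (Function.Injective.hasSum_iff (mul_right_injective₀ two_ne_zero) hodd).mpr hseries
  rw [besselI0]
  refine (heven.mul_left (1 / (2 * π))).congr_fun fun k ↦ ?_
  rw [Function.comp_apply, integral_cos_pow_even_zero_two_pi, div_pow, ← pow_mul]
  field_simp

lemma integrableOn_exp_neg_mul_pow (m : ℕ) :
    IntegrableOn (fun ν : ℝ ↦ exp (-ν) * ν ^ m) (Set.Ioi 0) := by
  simpa [← rpow_natCast] using GammaIntegral_convergent (s := m + 1) (by positivity)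

lemma integral_exp_neg_mul_pow (m : ℕ) :
    ∫ ν in Set.Ioi (0 : ℝ), exp (-ν) * ν ^ m = m ! := by
  simpa [← rpow_natCast] using (Gamma_eq_integral (s := m + 1) (by positivity)).symm.trans
    (Gamma_nat_eq_factorial m)

lemma integral_tsum_mul_exp_neg_mul_pow {c : ℕ → ℝ} {p : ℕ → ℕ} {S : ℝ} (hc : ∀ k, 0 ≤ c k)
    (hS : HasSum (fun k ↦ c k * (p k)!) S) :
    ∫ ν in Set.Ioi (0 : ℝ), ∑' k, c k * (exp (-ν) * ν ^ p k) = S := by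
  have hint (k : ℕ) := (integrableOn_exp_neg_mul_pow (p k)).const_mul (c k)
  have hval (k : ℕ) : ∫ ν in Set.Ioi (0 : ℝ), c k * (exp (-ν) * ν ^ p k) = c k * (p k)! := by
    rw [integral_const_mul, integral_exp_neg_mul_pow]
  have hnorm (k : ℕ) : ∫ ν in Set.Ioi (0 : ℝ), ‖c k * (exp (-ν) * ν ^ p k)‖ = c k * (p k)! := by
    rw [← hval]
    refine setIntegral_congr_fun measurableSet_Ioi fun ν (hν : 0 < ν) ↦ ?_
    exact norm_of_nonneg (by have := hc k; positivity)
  have hsum := hasSum_integral_of_summable_integral_norm hint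
    (by simpa only [hnorm] using hS.summable)
  simp only [hval] at hsum
  exact hsum.unique hS

lemma hasSum_factorial_add_div_factorial_sq_mul_pow (n : ℕ) (x : ℝ) :
    HasSum (fun k ↦ ((n + k)! : ℝ) / (k ! : ℝ) ^ 2 * x ^ k)
      (n ! * (exp x * ∑ m ∈ range (n + 1), (n.choose m : ℝ) * x ^ m / m !)) := by
  set b : ℕ → ℝ := fun m ↦ (n.choose m : ℝ) * x ^ m / (m ! : ℝ)
  have hb : ∀ m ∉ range (n + 1), b m = 0 := fun m hm ↦ by
    simp [b, choose_eq_zero_of_lt (by simpa using hm : n < m)]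
  have ha : Summable fun i ↦ ‖x ^ i / (i ! : ℝ)‖ := by
    simpa [abs_div, abs_pow] using Real.summable_pow_div_factorial |x|
  have hb' : Summable fun m ↦ ‖b m‖ :=
    summable_of_ne_finset_zero fun m hm ↦ by rw [hb m hm, norm_zero]
  have hcauchy := (summable_norm_sum_mul_antidiagonal_of_summable_norm ha hb').of_norm.hasSum
  rw [← tsum_mul_tsum_eq_tsum_sum_antidiagonal_of_summable_norm ha hb',
    (Real.hasSum_pow_div_factorial x).tsum_eq, tsum_eq_sum hb] at hcauchy
  refine (hcauchy.mul_left (n ! : ℝ)).congr_fun fun k ↦ ?_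
  have hterm : ∀ p ∈ antidiagonal k,
      x ^ p.1 / (p.1 ! : ℝ) * b p.2 = x ^ k / k ! * (k.choose p.1 * n.choose p.2 : ℕ) := by
    rintro ⟨i, j⟩ hij
    rw [HasAntidiagonal.mem_antidiagonal] at hij
    subst hij
    have hfact : ((i + j)! : ℝ) = (i + j).choose j * i ! * j ! := by
      exact_mod_cast (add_choose_mul_factorial_mul_factorial i j).symm
    have hchoose : ((i + j).choose j : ℝ) ≠ 0 := mod_cast (choose_pos (le_add_left j i)).ne'
    rw [choose_symm_add]
    simp only [b, hfact, pow_add]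
    push_cast
    field_simp
  rw [sum_congr rfl hterm, ← mul_sum, ← Nat.cast_sum, ← add_choose_eq, add_comm k n]
  have hfact : ((n + k)! : ℝ) = (n + k).choose k * n ! * k ! := by
    exact_mod_cast (add_choose_mul_factorial_mul_factorial n k).symm
  rw [hfact]
  field_simp

/-- Integral-transform identity of Appendix H: the kernel
`Q(ν, z) = e^{-ν - z²/2} I₀(z√(2ν))` maps `ν^n` to
`n! ∑_{m=0}^n (n choose m) (z²/2)^m / m!` (i.e. `n!·L_n(-z²/2)`). -/
theorem laguerre_integral_transform (z : ℝ) (n : ℕ) :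
    (∫ ν in Set.Ioi (0 : ℝ),
        Real.exp (-ν - z ^ 2 / 2) * besselI0 (z * Real.sqrt (2 * ν)) * ν ^ n) =
      (Nat.factorial n : ℝ) *
        ∑ m ∈ Finset.range (n + 1),
          (Nat.choose n m : ℝ) * (z ^ 2 / 2) ^ m / (Nat.factorial m : ℝ) := by
  set x := z ^ 2 / 2
  have hx : 0 ≤ x := by positivity
  have hexpand : ∀ ν ∈ Set.Ioi (0 : ℝ), exp (-ν - x) * besselI0 (z * √(2 * ν)) * ν ^ n =
      ∑' k, exp (-x) * x ^ k / (k ! : ℝ) ^ 2 * (exp (-ν) * ν ^ (n + k)) := fun ν hν ↦ by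
    have hβ : (z * √(2 * ν)) ^ 2 / 4 = x * ν := by
      rw [mul_pow, sq_sqrt (by linarith [hν.out])]
      ring
    refine ((((hasSum_besselI0 _).mul_left _).mul_right _).tsum_eq.symm.trans
      (tsum_congr fun k ↦ ?_))
    rw [hβ, sub_eq_add_neg, exp_add, mul_pow, pow_add]
    ring
  have hcoeff := ((hasSum_factorial_add_div_factorial_sq_mul_pow n x).mul_left (exp (-x))).congr_fun
    (g := fun k ↦ exp (-x) * x ^ k / (k ! : ℝ) ^ 2 * (n + k)!) fun k ↦ by ring
  rw [setIntegral_congr_fun measurableSet_Ioi hexpand,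
    integral_tsum_mul_exp_neg_mul_pow (fun k ↦ by positivity) hcoeff, exp_neg]
  field_simp
end
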